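/- Let F and Θ_j for every j ∈ J be strictly convex, and let S be convex. Suppose that for any x, y ∈ S with x ≠ y, either there exists i ∈ I with L(x,y) ∩ Ω_i = ∅ or there exists j ∈ J with L(x,y) ∩ Θ_j = ∅. Suppose further that for every x ∈ S the sets P_F(x; Ω_i) and Π_F(x; Θ_j) are nonempty for all i ∈ I and j ∈ J. Then the function H is strictly convex on S, and consequently the set of minimizers of H over S has at most one element. -/

import Mathlib

/-!
With `0 ∈ F`, `ρ_F` is the Minkowski functional `gauge F`, which is convex and positively
homogeneous. Writing `z = a • x + b • y`, a farthest point `ω` of `Ω` from `z` gives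
`C(z) = ρ(a(ω - x) + b(ω - y)) ≤ a ρ(ω - x) + b ρ(ω - y) ≤ a C(x) + b C(y)`, and nearest points
`u`, `v` of a convex `Θ` from `x`, `y` give `T(z) ≤ ρ(a u + b v - z) ≤ a T(x) + b T(y)`; so `H` is
convex. Strict convexity of `F` makes the gauge strictly subadditive on pairs of vectors not on a
common ray, and `ω - x`, `ω - y` are such a pair exactly when `ω` is off the line `L(x, y)`. For
`Θ` missing the line, either `u = v` is such a point, or `a u + b v` is an interior point of `Θ`
that can be pushed towards `z`. Either way one summand of `H` is strictly convex along `[x, y]`.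
-/

open Set Pointwise Filter Topology Bornology Function

variable {X : Type*} [NormedAddCommGroup X] [NormedSpace ℝ X]

/-- The Minkowski gauge of `F`: `ρ_F(x) = inf {t ≥ 0 : x ∈ t • F}`. -/
noncomputable def rhoF (F : Set X) (x : X) : ℝ :=
  sInf {t : ℝ | 0 ≤ t ∧ x ∈ t • F}

/-- The maximal time function `C_F(x; Q) = sup {ρ_F(q - x) : q ∈ Q}`. -/
noncomputable def maxTime (F Q : Set X) (x : X) : ℝ :=
  sSup ((fun q => rhoF F (q - x)) '' Q)

/-- The minimal time function `T_F(x; Θ) = inf {ρ_F(q - x) : q ∈ Θ}`. -/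
noncomputable def minTime (F Θ : Set X) (x : X) : ℝ :=
  sInf ((fun q => rhoF F (q - x)) '' Θ)

/-- `G(x) = max {C_F(x; Ω_i), T_F(x; Θ_j) : i ∈ I, j ∈ J}`. -/
noncomputable def GFun {ι κ : Type*} (F : Set X) (I : Finset ι) (J : Finset κ)
    (Ω : ι → Set X) (Θ : κ → Set X) (x : X) : ℝ :=
  sSup ((fun i => maxTime F (Ω i) x) '' ↑I ∪ (fun j => minTime F (Θ j) x) '' ↑J)

/-- `H(x) = Σ_{i∈I} C_F(x; Ω_i) + Σ_{j∈J} T_F(x; Θ_j)`. -/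
noncomputable def HFun {ι κ : Type*} (F : Set X) (I : Finset ι) (J : Finset κ)
    (Ω : ι → Set X) (Θ : κ → Set X) (x : X) : ℝ :=
  ∑ i ∈ I, maxTime F (Ω i) x + ∑ j ∈ J, minTime F (Θ j) x

/-- The farthest projection `P_F(x; Ω) = {ω ∈ Ω : ρ_F(ω - x) = C_F(x; Ω)}`. -/
def farProj (F Ω : Set X) (x : X) : Set X :=
  {ω ∈ Ω | rhoF F (ω - x) = maxTime F Ω x}

/-- The projection `Π_F(x; Θ) = {u ∈ Θ : ρ_F(u - x) = T_F(x; Θ)}`. -/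
def nearProj (F Θ : Set X) (x : X) : Set X :=
  {u ∈ Θ | rhoF F (u - x) = minTime F Θ x}

/-- The line through `x` and `y`: `L(x,y) = {t•x + (1-t)•y : t ∈ ℝ}`. -/
def lineThrough (x y : X) : Set X :=
  {z : X | ∃ t : ℝ, z = t • x + (1 - t) • y}


section Gauge

variable {F : Set X} {p q : X} {a b : ℝ}

lemma rhoF_eq_gauge (h0 : (0 : X) ∈ F) : rhoF F = gauge F := by
  funext x
  rcases eq_or_ne x 0 with rfl | hx
  · rw [gauge_zero]
    exact le_antisymm (csInf_le ⟨0, fun t ht => ht.1⟩ ⟨le_rfl, 0, h0, smul_zero 0⟩)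
      (Real.sInf_nonneg fun t ht => ht.1)
  · refine congrArg sInf (Set.ext fun t => ⟨fun ⟨ht, hxt⟩ => ⟨ht.lt_of_ne ?_, hxt⟩,
      fun ⟨ht, hxt⟩ => ⟨ht.le, hxt⟩⟩)
    rintro rfl
    exact hx (mem_singleton_iff.1 (zero_smul_set_subset F hxt))

lemma gauge_smul_add_smul_le (hFconv : Convex ℝ F) (hF0 : F ∈ 𝓝 0) (ha : 0 ≤ a) (hb : 0 ≤ b)
    (p q : X) : gauge F (a • p + b • q) ≤ a * gauge F p + b * gauge F q := by
  have := gauge_add_le hFconv (absorbent_nhds_zero hF0) (a • p) (b • q)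
  rwa [gauge_smul_of_nonneg ha, gauge_smul_of_nonneg hb] at this

lemma inv_gauge_smul_mem (hFc : IsClosed F) (hFconv : Convex ℝ F) (hF0 : F ∈ 𝓝 0) (p : X) :
    (gauge F p)⁻¹ • p ∈ F := by
  refine hFc.closure_subset ((gauge_le_one_iff_mem_closure hFconv hF0).1 ?_)
  rw [gauge_smul_of_nonneg (inv_nonneg.2 (gauge_nonneg p)), smul_eq_mul]
  exact inv_mul_le_one_of_le₀ le_rfl (gauge_nonneg p)

/-- Normalising `p` and `q` to the boundary of `F`, `p + q` is a positive multiple of a point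
strictly between two distinct points of `F`, hence of a point of `interior F`. -/
lemma gauge_add_lt_of_not_sameRay (hFc : IsClosed F) (hFb : IsBounded F) (hF0 : F ∈ 𝓝 0)
    (hFs : StrictConvex ℝ F) (h : ¬SameRay ℝ p q) : gauge F (p + q) < gauge F p + gauge F q := by
  have hvb : IsVonNBounded ℝ F := (NormedSpace.isVonNBounded_iff ℝ).2 hFb
  have hα : 0 < gauge F p :=
    (gauge_pos (absorbent_nhds_zero hF0) hvb).2 fun hp => h (hp ▸ SameRay.zero_left q)
  have hβ : 0 < gauge F q :=
    (gauge_pos (absorbent_nhds_zero hF0) hvb).2 fun hq => h (hq ▸ SameRay.zero_right p)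
  set α := gauge F p
  set β := gauge F q
  have hne : α⁻¹ • p ≠ β⁻¹ • q := by
    intro heq
    apply h
    rw [← smul_inv_smul₀ hα.ne' p, ← smul_inv_smul₀ hβ.ne' q, heq]
    exact sameRay_smul_smul_of_mul_nonneg (by positivity)
  have hint := hFs (inv_gauge_smul_mem hFc hFs.convex hF0 p)
    (inv_gauge_smul_mem hFc hFs.convex hF0 q) hne (by positivity : 0 < α / (α + β))
    (by positivity : 0 < β / (α + β)) (by field_simp)
  have hsum : p + q = (α + β) • ((α / (α + β)) • α⁻¹ • p + (β / (α + β)) • β⁻¹ • q) := by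
    match_scalars <;> field_simp
  rw [hsum, gauge_smul_of_nonneg (by positivity), smul_eq_mul]
  exact mul_lt_of_lt_one_right (by positivity) (interior_subset_gauge_lt_one F hint)

lemma gauge_smul_add_smul_lt (hFc : IsClosed F) (hFb : IsBounded F) (hF0 : F ∈ 𝓝 0)
    (hFs : StrictConvex ℝ F) (ha : 0 < a) (hb : 0 < b) (h : ¬SameRay ℝ p q) :
    gauge F (a • p + b • q) < a * gauge F p + b * gauge F q := by
  have h' : ¬SameRay ℝ (a • p) (b • q) := by
    intro hab
    have := (hab.pos_smul_left (inv_pos.2 ha)).pos_smul_right (inv_pos.2 hb)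
    exact h (by simpa [ha.ne', hb.ne'] using this)
  have := gauge_add_lt_of_not_sameRay hFc hFb hF0 hFs h'
  rwa [gauge_smul_of_nonneg ha.le, gauge_smul_of_nonneg hb.le] at this

end Gauge

section Line

variable {x y w : X} {a b : ℝ}

lemma smul_add_smul_mem_lineThrough (hab : a + b = 1) : a • x + b • y ∈ lineThrough x y :=
  ⟨a, by rw [← hab, add_sub_cancel_left]⟩

lemma sub_smul_add_smul (hab : a + b = 1) (w : X) :
    w - (a • x + b • y) = a • (w - x) + b • (w - y) := by
  rw [smul_sub, smul_sub, sub_add_sub_comm, ← add_smul, hab, one_smul]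

lemma not_sameRay_sub_of_notMem_lineThrough (hxy : x ≠ y) (hw : w ∉ lineThrough x y) :
    ¬SameRay ℝ (w - x) (w - y) := by
  rintro (hx | hy | ⟨r₁, r₂, hr₁, -, heq⟩)
  · exact hw ⟨1, by simp [sub_eq_zero.1 hx]⟩
  · exact hw ⟨0, by simp [sub_eq_zero.1 hy]⟩
  · rcases eq_or_ne r₁ r₂ with rfl | hr
    · exact hxy (sub_right_injective (smul_right_injective X hr₁.ne' heq))
    · refine hw ⟨r₁ / (r₁ - r₂), ?_⟩
      have hw' : (r₁ - r₂) • w = r₁ • x - r₂ • y := by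
        rw [sub_smul]
        linear_combination (norm := module) heq
      have hr' : r₁ - r₂ ≠ 0 := sub_ne_zero.2 hr
      apply smul_right_injective X hr'
      simp only [hw', smul_add, smul_smul]
      match_scalars <;> field_simp
      ring

end Line

section TimeFunctions

variable {F Ω Θ S : Set X} {x y z w : X} {a b : ℝ}

lemma bddAbove_gauge_sub_image (hFconv : Convex ℝ F) (hF0 : F ∈ 𝓝 0) (hΩ : IsBounded Ω)
    (x : X) : BddAbove ((fun q => gauge F (q - x)) '' Ω) := by
  obtain ⟨K, hK⟩ := hFconv.lipschitz_gauge hF0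
  exact ((hK.comp (IsometryEquiv.subRight x).isometry.lipschitz).isBounded_image hΩ).bddAbove

lemma maxTime_eq_sSup_gauge (hF0 : F ∈ 𝓝 0) (x : X) :
    maxTime F Ω x = sSup ((fun q => gauge F (q - x)) '' Ω) := by
  rw [maxTime, rhoF_eq_gauge (mem_of_mem_nhds hF0)]

lemma minTime_eq_sInf_gauge (hF0 : F ∈ 𝓝 0) (x : X) :
    minTime F Θ x = sInf ((fun q => gauge F (q - x)) '' Θ) := by
  rw [minTime, rhoF_eq_gauge (mem_of_mem_nhds hF0)]

lemma gauge_sub_le_maxTime (hFconv : Convex ℝ F) (hF0 : F ∈ 𝓝 0) (hΩ : IsBounded Ω)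
    (hw : w ∈ Ω) (x : X) : gauge F (w - x) ≤ maxTime F Ω x := by
  rw [maxTime_eq_sSup_gauge hF0]
  exact le_csSup (bddAbove_gauge_sub_image hFconv hF0 hΩ x) (mem_image_of_mem _ hw)

lemma minTime_le_gauge_sub (hF0 : F ∈ 𝓝 0) (hw : w ∈ Θ) (x : X) :
    minTime F Θ x ≤ gauge F (w - x) := by
  rw [minTime_eq_sInf_gauge hF0]
  exact csInf_le ⟨0, forall_mem_image.2 fun _ _ => gauge_nonneg _⟩ (mem_image_of_mem _ hw)

lemma gauge_sub_eq_maxTime (hF0 : F ∈ 𝓝 0) (hw : w ∈ farProj F Ω x) :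
    gauge F (w - x) = maxTime F Ω x := by
  rw [← rhoF_eq_gauge (mem_of_mem_nhds hF0)]
  exact hw.2

lemma gauge_sub_eq_minTime (hF0 : F ∈ 𝓝 0) (hw : w ∈ nearProj F Θ x) :
    gauge F (w - x) = minTime F Θ x := by
  rw [← rhoF_eq_gauge (mem_of_mem_nhds hF0)]
  exact hw.2

lemma minTime_lt_gauge_sub_of_mem_interior (hFb : IsBounded F) (hF0 : F ∈ 𝓝 0)
    (hw : w ∈ interior Θ) (hwz : w ≠ z) : minTime F Θ z < gauge F (w - z) := by
  have hpos : 0 < gauge F (w - z) :=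
    (gauge_pos (absorbent_nhds_zero hF0) ((NormedSpace.isVonNBounded_iff ℝ).2 hFb)).2
      (sub_ne_zero.2 hwz)
  have hpath : Tendsto (fun t : ℝ => w + t • (z - w)) (𝓝 0) (𝓝 w) := by
    have : Continuous (fun t : ℝ => w + t • (z - w)) := by fun_prop
    simpa using this.tendsto 0
  obtain ⟨t, htΘ, ht⟩ := ((eventually_nhdsWithin_of_eventually_nhds (hpath.eventually
    (mem_interior_iff_mem_nhds.1 hw))).and (Ioo_mem_nhdsGT one_pos)).exists
  calc minTime F Θ z ≤ gauge F (w + t • (z - w) - z) := minTime_le_gauge_sub hF0 htΘ z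
    _ = (1 - t) * gauge F (w - z) := by
      rw [← smul_eq_mul, ← gauge_smul_of_nonneg (sub_nonneg.2 ht.2.le)]
      congr 1
      module
    _ < gauge F (w - z) := by nlinarith [ht.1]

lemma convexOn_maxTime (hFconv : Convex ℝ F) (hF0 : F ∈ 𝓝 0) (hΩ : IsBounded Ω)
    (hS : Convex ℝ S) (hP : ∀ x ∈ S, (farProj F Ω x).Nonempty) : ConvexOn ℝ S (maxTime F Ω) := by
  refine ⟨hS, fun x hx y hy a b ha hb hab => ?_⟩
  obtain ⟨ω, hω⟩ := hP _ (hS hx hy ha hb hab)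
  calc maxTime F Ω (a • x + b • y) = gauge F (a • (ω - x) + b • (ω - y)) := by
        rw [← gauge_sub_eq_maxTime hF0 hω, sub_smul_add_smul hab]
    _ ≤ a * gauge F (ω - x) + b * gauge F (ω - y) := gauge_smul_add_smul_le hFconv hF0 ha hb _ _
    _ ≤ a * maxTime F Ω x + b * maxTime F Ω y := by
        gcongr <;> exact gauge_sub_le_maxTime hFconv hF0 hΩ hω.1 _

lemma maxTime_smul_add_smul_lt (hFc : IsClosed F) (hFb : IsBounded F) (hF0 : F ∈ 𝓝 0)
    (hFs : StrictConvex ℝ F) (hΩ : IsBounded Ω) (hxy : x ≠ y)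
    (hP : (farProj F Ω (a • x + b • y)).Nonempty) (hL : lineThrough x y ∩ Ω = ∅)
    (ha : 0 < a) (hb : 0 < b) (hab : a + b = 1) :
    maxTime F Ω (a • x + b • y) < a * maxTime F Ω x + b * maxTime F Ω y := by
  obtain ⟨ω, hω⟩ := hP
  have hωL : ω ∉ lineThrough x y := fun h => (eq_empty_iff_forall_notMem.1 hL ω) ⟨h, hω.1⟩
  calc maxTime F Ω (a • x + b • y) = gauge F (a • (ω - x) + b • (ω - y)) := by
        rw [← gauge_sub_eq_maxTime hF0 hω, sub_smul_add_smul hab]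
    _ < a * gauge F (ω - x) + b * gauge F (ω - y) :=
        gauge_smul_add_smul_lt hFc hFb hF0 hFs ha hb
          (not_sameRay_sub_of_notMem_lineThrough hxy hωL)
    _ ≤ a * maxTime F Ω x + b * maxTime F Ω y := by
        gcongr <;> exact gauge_sub_le_maxTime hFs.convex hF0 hΩ hω.1 _

lemma convexOn_minTime (hFconv : Convex ℝ F) (hF0 : F ∈ 𝓝 0) (hΘ : Convex ℝ Θ)
    (hS : Convex ℝ S) (hP : ∀ x ∈ S, (nearProj F Θ x).Nonempty) : ConvexOn ℝ S (minTime F Θ) := by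
  refine ⟨hS, fun x hx y hy a b ha hb hab => ?_⟩
  obtain ⟨u, hu⟩ := hP x hx
  obtain ⟨v, hv⟩ := hP y hy
  calc minTime F Θ (a • x + b • y) ≤ gauge F (a • u + b • v - (a • x + b • y)) :=
        minTime_le_gauge_sub hF0 (hΘ hu.1 hv.1 ha hb hab) _
    _ = gauge F (a • (u - x) + b • (v - y)) := by congr 1; module
    _ ≤ a * gauge F (u - x) + b * gauge F (v - y) := gauge_smul_add_smul_le hFconv hF0 ha hb _ _
    _ = a * minTime F Θ x + b * minTime F Θ y := by
        rw [gauge_sub_eq_minTime hF0 hu, gauge_sub_eq_minTime hF0 hv]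

/-- If the nearest points `u`, `v` differ, their combination lies in `interior Θ` and can be
pushed towards `a • x + b • y`; if they coincide, the gauge inequality itself is strict. -/
lemma minTime_smul_add_smul_lt (hFc : IsClosed F) (hFb : IsBounded F) (hF0 : F ∈ 𝓝 0)
    (hFs : StrictConvex ℝ F) (hΘ : StrictConvex ℝ Θ) (hxy : x ≠ y) {u v : X}
    (hu : u ∈ nearProj F Θ x) (hv : v ∈ nearProj F Θ y) (hL : lineThrough x y ∩ Θ = ∅)
    (ha : 0 < a) (hb : 0 < b) (hab : a + b = 1) :
    minTime F Θ (a • x + b • y) < a * minTime F Θ x + b * minTime F Θ y := by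
  have hoff : ∀ w ∈ Θ, w ∉ lineThrough x y := fun w hw h =>
    (eq_empty_iff_forall_notMem.1 hL w) ⟨h, hw⟩
  rw [← gauge_sub_eq_minTime hF0 hu, ← gauge_sub_eq_minTime hF0 hv]
  rcases eq_or_ne u v with rfl | huv
  · calc minTime F Θ (a • x + b • y) ≤ gauge F (u - (a • x + b • y)) :=
          minTime_le_gauge_sub hF0 hu.1 _
      _ = gauge F (a • (u - x) + b • (u - y)) := by rw [sub_smul_add_smul hab]
      _ < a * gauge F (u - x) + b * gauge F (u - y) :=
          gauge_smul_add_smul_lt hFc hFb hF0 hFs ha hb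
            (not_sameRay_sub_of_notMem_lineThrough hxy (hoff u hu.1))
  · have hw := hΘ hu.1 hv.1 huv ha hb hab
    have hwz : a • u + b • v ≠ a • x + b • y := fun h =>
      hoff _ (interior_subset hw) (h ▸ smul_add_smul_mem_lineThrough hab)
    calc minTime F Θ (a • x + b • y) < gauge F (a • u + b • v - (a • x + b • y)) :=
          minTime_lt_gauge_sub_of_mem_interior hFb hF0 hw hwz
      _ = gauge F (a • (u - x) + b • (v - y)) := by congr 1; module
      _ ≤ a * gauge F (u - x) + b * gauge F (v - y) :=
          gauge_smul_add_smul_le hFs.convex hF0 ha.le hb.le _ _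

end TimeFunctions

section Sums

variable {E ι : Type*} [AddCommGroup E] [Module ℝ E] {S : Set E} {x y : E} {a b : ℝ}

lemma convexOn_sum {s : Finset ι} {f : ι → E → ℝ} (hS : Convex ℝ S)
    (hf : ∀ i ∈ s, ConvexOn ℝ S (f i)) : ConvexOn ℝ S (∑ i ∈ s, f i) :=
  Finset.sum_induction f (ConvexOn ℝ S) (fun _ _ => ConvexOn.add) (convexOn_const 0 hS) hf

lemma sum_apply_smul_add_smul_lt {s : Finset ι} {f : ι → E → ℝ}
    (hf : ∀ i ∈ s, ConvexOn ℝ S (f i)) (hx : x ∈ S) (hy : y ∈ S) (ha : 0 ≤ a) (hb : 0 ≤ b)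
    (hab : a + b = 1) (hlt : ∃ i ∈ s, f i (a • x + b • y) < a * f i x + b * f i y) :
    (∑ i ∈ s, f i) (a • x + b • y) < a * (∑ i ∈ s, f i) x + b * (∑ i ∈ s, f i) y := by
  simp only [Finset.sum_apply, Finset.mul_sum, ← Finset.sum_add_distrib]
  exact Finset.sum_lt_sum (fun i hi => (hf i hi).2 hx hy ha hb hab) hlt

lemma ConvexOn.strictConvexOn_add_of_lt_or_lt {f g : E → ℝ} (hf : ConvexOn ℝ S f)
    (hg : ConvexOn ℝ S g)
    (hlt : ∀ x ∈ S, ∀ y ∈ S, x ≠ y → ∀ a b : ℝ, 0 < a → 0 < b → a + b = 1 →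
      f (a • x + b • y) < a * f x + b * f y ∨ g (a • x + b • y) < a * g x + b * g y) :
    StrictConvexOn ℝ S (f + g) := by
  refine ⟨hf.1, fun x hx y hy hxy a b ha hb hab => ?_⟩
  have hf' : f (a • x + b • y) ≤ a * f x + b * f y := hf.2 hx hy ha.le hb.le hab
  have hg' : g (a • x + b • y) ≤ a * g x + b * g y := hg.2 hx hy ha.le hb.le hab
  simp only [Pi.add_apply, smul_eq_mul]
  rcases hlt x hx y hy hxy a b ha hb hab with h | h <;> linarith

end Sums

lemma HFun_eq_sum_add_sum {ι κ : Type*} (F : Set X) (I : Finset ι) (J : Finset κ)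
    (Ω : ι → Set X) (Θ : κ → Set X) :
    HFun F I J Ω Θ = (∑ i ∈ I, maxTime F (Ω i)) + ∑ j ∈ J, minTime F (Θ j) := by
  funext x
  simp only [HFun, Pi.add_apply, Finset.sum_apply]

theorem stmt18_general
    {ι κ : Type*} (F : Set X) (I : Finset ι) (J : Finset κ)
    (Ω : ι → Set X) (Θ : κ → Set X) (S : Set X)
    (hFc : IsClosed F) (hFb : IsBounded F) (hFconv : Convex ℝ F)
    (hF0 : (0 : X) ∈ interior F)
    (hΩb : ∀ i ∈ I, IsBounded (Ω i))
    (hFs : StrictConvex ℝ F) (hΘs : ∀ j ∈ J, StrictConvex ℝ (Θ j))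
    (hSconv : Convex ℝ S)
    (hline : ∀ x ∈ S, ∀ y ∈ S, x ≠ y →
      (∃ i ∈ I, lineThrough x y ∩ Ω i = ∅) ∨ (∃ j ∈ J, lineThrough x y ∩ Θ j = ∅))
    (hP : ∀ x ∈ S, ∀ i ∈ I, (farProj F (Ω i) x).Nonempty)
    (hPi : ∀ x ∈ S, ∀ j ∈ J, (nearProj F (Θ j) x).Nonempty) :
    StrictConvexOn ℝ S (HFun F I J Ω Θ) ∧
      {x ∈ S | ∀ y ∈ S, HFun F I J Ω Θ x ≤ HFun F I J Ω Θ y}.Subsingleton := by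
  have hF : F ∈ 𝓝 (0 : X) := mem_interior_iff_mem_nhds.1 hF0
  have hC : ∀ i ∈ I, ConvexOn ℝ S (maxTime F (Ω i)) := fun i hi =>
    convexOn_maxTime hFconv hF (hΩb i hi) hSconv fun x hx => hP x hx i hi
  have hT : ∀ j ∈ J, ConvexOn ℝ S (minTime F (Θ j)) := fun j hj =>
    convexOn_minTime hFconv hF (hΘs j hj).convex hSconv fun x hx => hPi x hx j hj
  have hH : StrictConvexOn ℝ S (HFun F I J Ω Θ) := by
    rw [HFun_eq_sum_add_sum]
    refine (convexOn_sum hSconv hC).strictConvexOn_add_of_lt_or_lt (convexOn_sum hSconv hT) ?_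
    intro x hx y hy hxy a b ha hb hab
    rcases hline x hx y hy hxy with ⟨i, hi, hL⟩ | ⟨j, hj, hL⟩
    · have hz := hP _ (hSconv hx hy ha.le hb.le hab) i hi
      exact .inl <| sum_apply_smul_add_smul_lt hC hx hy ha.le hb.le hab
        ⟨i, hi, maxTime_smul_add_smul_lt hFc hFb hF hFs (hΩb i hi) hxy hz hL ha hb hab⟩
    · obtain ⟨u, hu⟩ := hPi x hx j hj
      obtain ⟨v, hv⟩ := hPi y hy j hj
      exact .inr <| sum_apply_smul_add_smul_lt hT hx hy ha.le hb.le hab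
        ⟨j, hj, minTime_smul_add_smul_lt hFc hFb hF hFs (hΘs j hj) hxy hu hv hL ha hb hab⟩
  exact ⟨hH, fun x hx y hy => hH.eq_of_isMinOn (isMinOn_iff.2 hx.2) (isMinOn_iff.2 hy.2) hx.1 hy.1⟩

/-- Theorem 3.13. -/
theorem stmt18
    {ι κ : Type*} (F : Set X) (I : Finset ι) (J : Finset κ)
    (Ω : ι → Set X) (Θ : κ → Set X) (S : Set X)
    (hFc : IsClosed F) (hFb : IsBounded F) (hFconv : Convex ℝ F)
    (hF0 : (0 : X) ∈ interior F)
    (hΩne : ∀ i ∈ I, (Ω i).Nonempty) (hΩc : ∀ i ∈ I, IsClosed (Ω i))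
    (hΩb : ∀ i ∈ I, IsBounded (Ω i))
    (hΘne : ∀ j ∈ J, (Θ j).Nonempty) (hΘc : ∀ j ∈ J, IsClosed (Θ j))
    (hSne : S.Nonempty) (hSc : IsClosed S)
    (hIJ : I.Nonempty ∨ J.Nonempty)
    (hFs : StrictConvex ℝ F) (hΘs : ∀ j ∈ J, StrictConvex ℝ (Θ j))
    (hSconv : Convex ℝ S)
    (hline : ∀ x ∈ S, ∀ y ∈ S, x ≠ y →
      (∃ i ∈ I, lineThrough x y ∩ Ω i = ∅) ∨ (∃ j ∈ J, lineThrough x y ∩ Θ j = ∅))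
    (hP : ∀ x ∈ S, ∀ i ∈ I, (farProj F (Ω i) x).Nonempty)
    (hPi : ∀ x ∈ S, ∀ j ∈ J, (nearProj F (Θ j) x).Nonempty) :
    StrictConvexOn ℝ S (HFun F I J Ω Θ) ∧
      {x ∈ S | ∀ y ∈ S, HFun F I J Ω Θ x ≤ HFun F I J Ω Θ y}.Subsingleton :=
  stmt18_general F I J Ω Θ S hFc hFb hFconv hF0 hΩb hFs hΘs hSconv hline hP hPi
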